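/- arXiv:2404.09902 — 4 statements merged into one kernel-verified Lean document; each statement's English description precedes it below -/
import Mathlib

section
/- Let G be a strongly regular graph with smallest eigenvalue s < 0. Then every clique in G has size at most 1 − k/s, where k is the valency of G (the Delsarte bound). -/
open Matrix


/-- the Delsarte clique bound: every clique of a strongly regular graph
with smallest eigenvalue s < 0 has size at most 1 − k/s. -/
theorem stmt4 {V : Type*} [Fintype V] [DecidableEq V] (G : SimpleGraph V)
    [DecidableRel G.Adj]
    (v k lam mu : ℕ) (h : G.IsSRGWith v k lam mu)
    (hprim : 0 < mu ∧ mu < k)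
    (s : ℝ) (hs_neg : s < 0)
    (hs_eig : s ∈ spectrum ℝ (Matrix.toLin' (G.adjMatrix ℝ)))
    (hs_min : ∀ θ ∈ spectrum ℝ (Matrix.toLin' (G.adjMatrix ℝ)), s ≤ θ)
    (C : Finset V) (hC : G.IsClique (C : Set V)) :
    (C.card : ℝ) ≤ 1 - (k : ℝ) / s := by
  classical
  -- trivial case: empty clique
  rcases C.eq_empty_or_nonempty with rfl | hCne
  · have : (k : ℝ) / s ≤ 0 := div_nonpos_of_nonneg_of_nonpos (by positivity) hs_neg.le
    simpa using by linarith
  have hVne : Nonempty V := ⟨hCne.choose⟩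
  set A : Matrix V V ℝ := G.adjMatrix ℝ with hA
  set J : Matrix V V ℝ := Matrix.of (fun _ _ => (1 : ℝ)) with hJ
  -- row sums
  have hrow : ∀ i, ∑ j, A i j = (k : ℝ) := by
    intro i
    simp only [hA, SimpleGraph.adjMatrix_apply]
    rw [Finset.sum_boole]
    have hd := h.regular i
    rw [← SimpleGraph.neighborFinset_eq_filter]
    exact_mod_cast hd
  have hAsymm : Aᵀ = A := SimpleGraph.transpose_adjMatrix (α := ℝ) G
  have hcol : ∀ j, ∑ i, A i j = (k : ℝ) := by
    intro j
    have : ∀ i, A i j = A j i := fun i => by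
      conv_lhs => rw [← hAsymm]
      rfl
    simp_rw [this]
    exact hrow j
  -- adjacency matrix of complement equals J - 1 - A
  have hcompl : (Gᶜ.adjMatrix ℝ) = J - 1 - A := by
    ext i j
    by_cases hij : i = j
    · subst hij; simp [hJ, hA]
    · by_cases hadj : G.Adj i j
      · simp [hJ, hA, hadj, Matrix.one_apply_ne hij, hij]
      · simp [hJ, hA, hadj, Matrix.one_apply_ne hij, hij]
  have h2 : A * A = (k : ℝ) • (1 : Matrix V V ℝ) + (lam : ℝ) • A + (mu : ℝ) • (J - 1 - A) := by
    have := h.matrix_eq (α := ℝ)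
    rw [pow_two, hcompl] at this
    simpa [Nat.cast_smul_eq_nsmul] using this
  have hAJ : A * J = (k : ℝ) • J := by
    ext i j
    simp [hJ, Matrix.mul_apply, hrow i]
  have hJA : J * A = (k : ℝ) • J := by
    ext i j
    simp [hJ, Matrix.mul_apply, hcol j]
  have hJJ : J * J = (v : ℝ) • J := by
    ext i j
    simp [hJ, Matrix.mul_apply, h.card]
  -- eigenvector
  have hEig : Module.End.HasEigenvalue (Matrix.toLin' A) s :=
    Module.End.HasEigenvalue.of_mem_spectrum hs_eig
  obtain ⟨x, hx⟩ := hEig.exists_hasEigenvector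
  have hxv : A.mulVec x = s • x := by
    have := hx.apply_eq_smul
    simpa [Matrix.toLin'_apply] using this
  have hx0 : x ≠ 0 := hx.right
  -- sum of entries of x is 0
  have hsum : ∑ i, x i = 0 := by
    have hks : (k : ℝ) ≠ s := by
      have : (0:ℝ) ≤ k := by positivity
      linarith
    have h1 : ∑ i, (A.mulVec x) i = (k : ℝ) * ∑ j, x j := by
      simp only [Matrix.mulVec, dotProduct]
      rw [Finset.sum_comm, Finset.mul_sum]
      refine Finset.sum_congr rfl fun j _ => ?_
      rw [← Finset.sum_mul, hcol j]
    have h2' : ∑ i, (A.mulVec x) i = s * ∑ i, x i := by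
      rw [hxv]; simp [Finset.mul_sum]
    have h3 := h1.symm.trans h2'
    rcases mul_eq_mul_right_iff.mp h3 with h' | h'
    · exact absurd h' hks
    · exact h'
  -- quadratic equation for s
  obtain ⟨i0, hi0⟩ : ∃ i, x i ≠ 0 := Function.ne_iff.mp hx0
  have hs2 : s * s = ((lam : ℝ) - mu) * s + ((k : ℝ) - mu) := by
    have hAAx : (A * A).mulVec x = (s * s) • x := by
      rw [← Matrix.mulVec_mulVec, hxv, Matrix.mulVec_smul, hxv, smul_smul]
    have hJx : J.mulVec x = 0 := by
      ext i
      simp [hJ, Matrix.mulVec, dotProduct, hsum]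
    rw [h2] at hAAx
    have hfun := congrFun hAAx i0
    simp only [Matrix.add_mulVec, Matrix.sub_mulVec, Matrix.smul_mulVec, hJx, hxv,
      Matrix.one_mulVec, Pi.add_apply, Pi.smul_apply, Pi.sub_apply, Pi.zero_apply,
      smul_eq_mul] at hfun
    have h3 : (((lam : ℝ) - mu) * s + ((k : ℝ) - mu)) * x i0 = s * s * x i0 := by
      ring_nf
      ring_nf at hfun
      linarith [hfun]
    exact (mul_right_cancel₀ hi0 h3).symm
  -- identity mu * v = k^2 - (lam - mu)*k - k + mu (row of matrix identity applied to all-ones)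
  obtain ⟨w0⟩ := hVne
  have hv : (mu : ℝ) * v = (k:ℝ) * k - ((lam:ℝ) - mu) * k - k + mu := by
    have h1 : ((A * A).mulVec (fun _ => (1:ℝ))) w0 = (k:ℝ) * k := by
      rw [← Matrix.mulVec_mulVec]
      have hA1 : A.mulVec (fun _ => (1:ℝ)) = fun _ => (k:ℝ) := by
        ext i; simp [Matrix.mulVec, dotProduct, hrow i]
      rw [hA1]
      simp only [Matrix.mulVec, dotProduct]
      rw [← Finset.sum_mul, hrow w0]
    rw [h2] at h1
    have hJ1 : J.mulVec (fun _ => (1:ℝ)) = fun _ => (v:ℝ) := by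
      ext i; simp [hJ, Matrix.mulVec, dotProduct, h.card]
    have h11 : A.mulVec (fun _ => (1:ℝ)) = fun _ => (k:ℝ) := by
      ext i; simp [Matrix.mulVec, dotProduct, hrow i]
    simp only [Matrix.add_mulVec, Matrix.sub_mulVec, Matrix.smul_mulVec, hJ1, h11,
      Matrix.one_mulVec, Pi.add_apply, Pi.smul_apply, Pi.sub_apply, smul_eq_mul] at h1
    linarith [h1]
  -- the other eigenvalue
  set r : ℝ := (lam : ℝ) - mu - s with hr
  have hrs : r * s = (mu : ℝ) - k := by
    rw [hr]; linear_combination (-1 : ℝ) * hs2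
  have hrpos : 0 < r := by
    have hmk : (mu : ℝ) - k < 0 := by
      have := hprim.2
      have : (mu:ℝ) < k := by exact_mod_cast this
      linarith
    by_contra h'
    push_neg at h'
    nlinarith [mul_nonneg (neg_nonneg.2 h') (neg_nonneg.2 hs_neg.le)]
  -- the PSD certificate matrix
  set N : Matrix V V ℝ := (mu : ℝ) • J + ((k:ℝ) - s) • (r • (1 : Matrix V V ℝ) - A) with hN
  have hNsymm : Nᵀ = N := by
    have hJsymm : Jᵀ = J := by ext i j; simp [hJ, Matrix.transpose_apply]
    simp [hN, Matrix.transpose_add, Matrix.transpose_smul, Matrix.transpose_sub,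
      Matrix.transpose_one, hAsymm, hJsymm]
  have key1 : A * N = s • N := by
    rw [hN]
    simp only [Matrix.mul_add, Matrix.mul_smul, Matrix.mul_sub, Matrix.mul_one, hAJ, h2,
      smul_add, smul_sub, smul_smul]
    match_scalars
    · ring
    · ring
    · linear_combination ((k:ℝ) - s) * hs2
  have key2 : J * N = 0 := by
    rw [hN]
    simp only [Matrix.mul_add, Matrix.mul_smul, Matrix.mul_sub, Matrix.mul_one, hJA, hJJ,
      smul_add, smul_sub, smul_smul]
    have hz : (mu : ℝ) * v + ((k:ℝ) - s) * r - ((k:ℝ) - s) * k = 0 := by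
      rw [hr]
      linear_combination hv + hs2
    match_scalars
    linear_combination hz
  have key3 : N * N = (((k:ℝ) - s) * (r - s)) • N := by
    calc N * N = (mu : ℝ) • (J * N) + ((k:ℝ) - s) • (r • N - A * N) := by
          nth_rewrite 1 [hN]
          rw [Matrix.add_mul, Matrix.smul_mul, Matrix.smul_mul, Matrix.sub_mul,
            Matrix.smul_mul, Matrix.one_mul]
      _ = (((k:ℝ) - s) * (r - s)) • N := by
          rw [key2, key1, smul_zero, zero_add, smul_sub, smul_smul, smul_smul]
          rw [← sub_smul]
          ring_nf
  -- indicator vector of the clique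
  set χ : V → ℝ := fun i => if i ∈ C then 1 else 0 with hχ
  have hS2 : ∀ M : Matrix V V ℝ, χ ⬝ᵥ M.mulVec χ = ∑ i ∈ C, ∑ j ∈ C, M i j := by
    intro M
    simp only [dotProduct, Matrix.mulVec, hχ, mul_ite, mul_one, mul_zero,
      ite_mul, one_mul, zero_mul]
    rw [Finset.sum_ite_mem, Finset.univ_inter]
    exact Finset.sum_congr rfl fun i _ => by rw [Finset.sum_ite_mem, Finset.univ_inter]
  have hJq : χ ⬝ᵥ J.mulVec χ = (C.card : ℝ) * C.card := by
    rw [hS2]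
    simp [hJ, Finset.sum_const, nsmul_eq_mul]
  have h1q : χ ⬝ᵥ (1 : Matrix V V ℝ).mulVec χ = (C.card : ℝ) := by
    rw [hS2]
    have hinner : ∀ i ∈ C, ∑ j ∈ C, (1 : Matrix V V ℝ) i j = 1 := by
      intro i hi
      simp only [Matrix.one_apply]
      rw [Finset.sum_ite_eq C i (fun _ => (1:ℝ))]
      simp [hi]
    rw [Finset.sum_congr rfl hinner, Finset.sum_const, nsmul_eq_mul, mul_one]
  have hAq : χ ⬝ᵥ A.mulVec χ = (C.card : ℝ) * ((C.card : ℝ) - 1) := by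
    rw [hS2]
    have hinner : ∀ i ∈ C, ∑ j ∈ C, A i j = (C.card : ℝ) - 1 := by
      intro i hi
      have hAij : ∀ j ∈ C, A i j = (if i = j then (0:ℝ) else 1) := by
        intro j hj
        by_cases hij : i = j
        · subst hij; simp [hA]
        · have hadj : G.Adj i j := hC hi hj hij
          simp [hA, hadj, hij]
      rw [Finset.sum_congr rfl hAij]
      have : ∑ j ∈ C, (if i = j then (0:ℝ) else 1)
          = ∑ j ∈ C, ((1:ℝ) - if i = j then (1:ℝ) else 0) :=
        Finset.sum_congr rfl (by intro j _; by_cases hij : i = j <;> simp [hij])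
      rw [this, Finset.sum_sub_distrib, Finset.sum_const, nsmul_eq_mul, mul_one,
        Finset.sum_ite_eq C i (fun _ => (1:ℝ))]
      simp [hi]
    rw [Finset.sum_congr rfl hinner, Finset.sum_const, nsmul_eq_mul]
  have hval : χ ⬝ᵥ N.mulVec χ
      = (mu:ℝ) * ((C.card : ℝ) * C.card)
        + ((k:ℝ) - s) * (r * C.card - (C.card : ℝ) * ((C.card : ℝ) - 1)) := by
    rw [hN]
    simp only [Matrix.add_mulVec, Matrix.sub_mulVec, Matrix.smul_mulVec,
      dotProduct_add, dotProduct_sub, dotProduct_smul, smul_eq_mul]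
    rw [hJq, h1q, hAq]
  have hdot : 0 ≤ (N.mulVec χ) ⬝ᵥ (N.mulVec χ) :=
    Finset.sum_nonneg fun i _ => mul_self_nonneg _
  have hkpos : (0:ℝ) ≤ k := by positivity
  have hcpos : 0 < ((k:ℝ) - s) * (r - s) := by
    apply mul_pos <;> linarith
  have heq : (((k:ℝ) - s) * (r - s)) * (χ ⬝ᵥ N.mulVec χ)
      = (N.mulVec χ) ⬝ᵥ (N.mulVec χ) := by
    calc (((k:ℝ) - s) * (r - s)) * (χ ⬝ᵥ N.mulVec χ)
        = χ ⬝ᵥ (((((k:ℝ) - s) * (r - s)) • N).mulVec χ) := by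
          rw [Matrix.smul_mulVec, dotProduct_smul, smul_eq_mul]
      _ = χ ⬝ᵥ ((N * N).mulVec χ) := by rw [← key3]
      _ = χ ⬝ᵥ (N.mulVec (N.mulVec χ)) := by rw [← Matrix.mulVec_mulVec]
      _ = (χ ᵥ* N) ⬝ᵥ (N.mulVec χ) := by rw [Matrix.dotProduct_mulVec]
      _ = (N.mulVec χ) ⬝ᵥ (N.mulVec χ) := by rw [← Matrix.mulVec_transpose, hNsymm]
  have hquad_nonneg : 0 ≤ χ ⬝ᵥ N.mulVec χ := by
    by_contra hneg
    push_neg at hneg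
    have hgt := mul_pos hcpos (neg_pos.mpr hneg)
    nlinarith [heq, hdot]
  have hc1 : (1:ℝ) ≤ (C.card : ℝ) := by exact_mod_cast hCne.card_pos
  set c : ℝ := (C.card : ℝ) with hcdef
  have hpos : 0 ≤ (mu:ℝ) * (c * c) + ((k:ℝ) - s) * (r * c - c * (c - 1)) := by
    rw [hval] at hquad_nonneg
    exact hquad_nonneg
  have hident : (mu:ℝ) * (c * c) + ((k:ℝ) - s) * (r * c - c * (c - 1))
      = c * ((r + 1) * (s * c + ((k:ℝ) - s))) := by
    linear_combination (-(c * c)) * hrs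
  have hfac : 0 ≤ (r + 1) * (s * c + ((k:ℝ) - s)) := by
    have hcp : 0 < c := by linarith
    rw [hident] at hpos
    exact (mul_nonneg_iff_of_pos_left hcp).mp hpos
  have h5 : 0 ≤ s * c + (k:ℝ) - s := by
    have hr1 : 0 < r + 1 := by linarith
    have h6 := (mul_nonneg_iff_of_pos_left hr1).mp hfac
    linarith [h6]
  have hdiv : (1:ℝ) - (k:ℝ) / s = (s - k) / s := by
    rw [sub_div, div_self (ne_of_lt hs_neg)]
  rw [hdiv, le_div_iff_of_neg hs_neg]
  linarith [h5]
end

section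
/- Let q be an odd prime power. The symplectic graph Sp(4,q) contains an induced subgraph isomorphic to the complete bipartite graph K_{q+1,q+1}; consequently, Sp(4,q) admits an eigenfunction for the eigenvalue −(q+1) whose support has cardinality exactly 2(q+1), meeting the weight-distribution bound. -/
namespace Stmt7

/-- The points of PG(3,q): 1-dimensional subspaces of F⁴. -/
def Pt (F : Type*) [Field F] : Type _ :=
  {p : Submodule F (Fin 4 → F) // Module.finrank F p = 1}

/-- The symplectic graph Sp(4,q): points of PG(3,q), adjacent iff orthogonal
with respect to the alternating form B. -/
def sp {F : Type*} [Field F] (B : LinearMap.BilinForm F (Fin 4 → F)) :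
    SimpleGraph (Pt F) where
  Adj x y := x ≠ y ∧ (∀ u ∈ x.1, ∀ v ∈ y.1, B u v = 0) ∧
    (∀ u ∈ y.1, ∀ v ∈ x.1, B u v = 0)
  symm := ⟨fun _ _ h => ⟨h.1.symm, h.2.2, h.2.1⟩⟩
  loopless := ⟨fun _ h => h.1 rfl⟩

end Stmt7

open Stmt7

section Helpers

variable {F : Type*} [Field F]

private lemma skewB (B : LinearMap.BilinForm F (Fin 4 → F)) (halt : ∀ v, B v v = 0)
    (v w : Fin 4 → F) : B w v = - B v w := by
  have h := halt (v + w)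
  simp only [map_add, LinearMap.add_apply, halt] at h
  linear_combination h

private noncomputable def pt {v : Fin 4 → F} (hv : v ≠ 0) : Pt F :=
  ⟨Submodule.span F {v}, finrank_span_singleton hv⟩

private lemma pt_fst {v : Fin 4 → F} (hv : v ≠ 0) :
    (pt hv).1 = Submodule.span F {v} := rfl

private lemma exists_gen (p : Pt F) :
    ∃ v : Fin 4 → F, ∃ hv : v ≠ 0, p = pt hv := by
  obtain ⟨W, hW⟩ := p
  have : FiniteDimensional F W := .of_finrank_eq_succ hW
  have hnt : Nontrivial W := Module.nontrivial_of_finrank_pos (R := F) (by omega)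
  obtain ⟨v, hv⟩ := exists_ne (0 : W)
  have hv0 : (v : Fin 4 → F) ≠ 0 := fun hc => hv (Subtype.ext hc)
  have hle : Submodule.span F {(v : Fin 4 → F)} ≤ W := by
    rw [Submodule.span_singleton_le_iff_mem]; exact v.2
  have heq := Submodule.eq_of_le_of_finrank_eq hle
    (by rw [finrank_span_singleton hv0, hW])
  exact ⟨v, hv0, Subtype.ext heq.symm⟩

private lemma prop2 {e f v w : Fin 4 → F} {a b a' b' : F}
    (hv : v = a • e + b • f) (hw : w = a' • e + b' • f)
    (hdet : a * b' = a' * b) (hv0 : v ≠ 0) : ∃ c : F, w = c • v := by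
  by_cases ha : a = 0
  · have hb : b ≠ 0 := by
      rintro rfl
      exact hv0 (by rw [hv, ha]; simp)
    have ha' : a' = 0 := by
      have : a' * b = 0 := by rw [← hdet, ha, zero_mul]
      exact (mul_eq_zero.mp this).resolve_right hb
    refine ⟨b' / b, ?_⟩
    rw [hv, hw, ha, ha']
    match_scalars <;> field_simp <;> ring
  · refine ⟨a' / a, ?_⟩
    rw [hv, hw]
    match_scalars
    · field_simp
    · field_simp
      linear_combination hdet

private lemma span_eq_span {v w : Fin 4 → F} (hw : w ≠ 0) {c : F} (hcv : w = c • v) :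
    Submodule.span F {w} = Submodule.span F {v} := by
  have hc : c ≠ 0 := by rintro rfl; exact hw (by simp [hcv])
  rw [hcv]
  exact Submodule.span_singleton_smul_eq (isUnit_iff_ne_zero.mpr hc) v

end Helpers

section Plane

variable {F : Type*} [Field F]

private noncomputable def phi {e f : Fin 4 → F} (he : e ≠ 0) (hf : ∀ c : F, c • e + f ≠ 0) :
    Option F → Pt F
  | none => pt he
  | some c => pt (hf c)

private lemma plane_points [Fintype F] {e f : Fin 4 → F}
    (hli : LinearIndependent F ![e, f]) :
    {p : Pt F | p.1 ≤ Submodule.span F {e, f}}.Finite ∧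
    {p : Pt F | p.1 ≤ Submodule.span F {e, f}}.ncard = Fintype.card F + 1 := by
  have he : e ≠ 0 := by
    have := hli.ne_zero 0; simpa using this
  have hf : ∀ c : F, c • e + f ≠ 0 := by
    intro c hc
    have : c • e + (1 : F) • f = 0 := by rw [one_smul]; exact hc
    exact one_ne_zero (hli.eq_zero_of_pair this).2
  have hrange : {p : Pt F | p.1 ≤ Submodule.span F {e, f}} = Set.range (phi he hf) := by
    ext p
    constructor
    · intro hp
      obtain ⟨v, hv0, rfl⟩ := exists_gen p
      have hvW : v ∈ Submodule.span F {e, f} := hp (Submodule.mem_span_singleton_self v)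
      obtain ⟨a, b, hab⟩ := Submodule.mem_span_pair.mp hvW
      by_cases hb : b = 0
      · refine ⟨none, ?_⟩
        have hve : v = a • e := by rw [← hab, hb]; simp
        exact Subtype.ext ((span_eq_span hv0 hve).symm : Submodule.span F {e} = _)
      · refine ⟨some (a / b), ?_⟩
        apply Subtype.ext
        have hveq : v = b • ((a / b) • e + f) := by
          rw [← hab]
          match_scalars
          · field_simp
          · ring
        exact ((span_eq_span hv0 hveq).symm :
          Submodule.span F {(a / b) • e + f} = _)
    · rintro ⟨o, rfl⟩
      cases o with
      | none =>
        show (pt he).1 ≤ _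
        rw [pt_fst, Submodule.span_singleton_le_iff_mem]
        exact Submodule.subset_span (by simp)
      | some c =>
        show (pt (hf c)).1 ≤ _
        rw [pt_fst, Submodule.span_singleton_le_iff_mem]
        exact Submodule.mem_span_pair.mpr ⟨c, 1, by rw [one_smul]⟩
  have hinj : Function.Injective (phi he hf) := by
    intro o o' hoo
    have hspan := congrArg (fun p : Pt F => p.1) hoo
    match o, o' with
    | none, none => rfl
    | none, some c =>
      exfalso
      have : c • e + f ∈ Submodule.span F {e} := by
        rw [show (Submodule.span F {e} : Submodule F (Fin 4 → F)) = _ from hspan]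
        exact Submodule.mem_span_singleton_self _
      obtain ⟨t, ht⟩ := Submodule.mem_span_singleton.mp this
      have : (t - c) • e + (-1 : F) • f = 0 := by
        linear_combination (norm := module) ht
      have := (hli.eq_zero_of_pair this).2
      norm_num at this
    | some c, none =>
      exfalso
      have : c • e + f ∈ Submodule.span F {e} := by
        rw [show (Submodule.span F {e} : Submodule F (Fin 4 → F)) = _ from hspan.symm]
        exact Submodule.mem_span_singleton_self _
      obtain ⟨t, ht⟩ := Submodule.mem_span_singleton.mp this
      have : (t - c) • e + (-1 : F) • f = 0 := by
        linear_combination (norm := module) ht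
      have := (hli.eq_zero_of_pair this).2
      norm_num at this
    | some c, some c' =>
      have : c' • e + f ∈ Submodule.span F {c • e + f} := by
        rw [show (Submodule.span F {c • e + f} : Submodule F (Fin 4 → F)) = _ from hspan]
        exact Submodule.mem_span_singleton_self _
      obtain ⟨t, ht⟩ := Submodule.mem_span_singleton.mp this
      have hz : (t * c - c') • e + (t - 1) • f = 0 := by
        linear_combination (norm := module) ht
      obtain ⟨h1, h2⟩ := hli.eq_zero_of_pair hz
      have hcc : c = c' := by linear_combination h1 - c * h2
      rw [hcc]
  constructor
  · rw [hrange]; exact Set.finite_range _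
  · rw [hrange, ← Set.image_univ, Set.ncard_image_of_injective _ hinj, Set.ncard_univ,
      Nat.card_eq_fintype_card, Fintype.card_option]

end Plane

section Main

variable {F : Type*} [Field F] [Fintype F]

private lemma main_lemma (q : ℕ) (hq : Fintype.card F = q)
    (B : LinearMap.BilinForm F (Fin 4 → F))
    (halt : ∀ v, B v v = 0)
    (hnd : ∀ v, (∀ w, B v w = 0) → v = 0)
    (e f g h : Fin 4 → F)
    (hef : B e f = 1) (hgh : B g h = 1)
    (heg : B e g = 0) (heh : B e h = 0) (hfg : B f g = 0) (hfh : B f h = 0) :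
    (∃ T₀ T₁ : Set (Pt F), Disjoint T₀ T₁ ∧
      T₀.ncard = q + 1 ∧ T₁.ncard = q + 1 ∧
      (∀ x ∈ T₀, ∀ y ∈ T₁, (sp B).Adj x y) ∧
      (∀ x ∈ T₀, ∀ y ∈ T₀, ¬ (sp B).Adj x y) ∧
      (∀ x ∈ T₁, ∀ y ∈ T₁, ¬ (sp B).Adj x y)) ∧
    (∃ f : Pt F → ℝ, f ≠ 0 ∧
      (∀ u, (-(q + 1 : ℝ)) * f u = ∑ᶠ w ∈ {w | (sp B).Adj u w}, f w) ∧
      (Function.support f).ncard = 2 * (q + 1)) := by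
  classical
  have skw : ∀ v w, B w v = - B v w := skewB B halt
  have hfe : B f e = -1 := by rw [skw, hef]
  have hge : B g e = 0 := by rw [skw, heg, neg_zero]
  have hhe : B h e = 0 := by rw [skw, heh, neg_zero]
  have hgf : B g f = 0 := by rw [skw, hfg, neg_zero]
  have hhf : B h f = 0 := by rw [skw, hfh, neg_zero]
  have hhg : B h g = -1 := by rw [skw, hgh]
  have he0 : e ≠ 0 := by
    rintro rfl; rw [map_zero, LinearMap.zero_apply] at hef; exact one_ne_zero hef.symm
  have hg0 : g ≠ 0 := by
    rintro rfl; rw [map_zero, LinearMap.zero_apply] at hgh; exact one_ne_zero hgh.symm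
  have hli4 : LinearIndependent F ![e, f, g, h] := by
    rw [Fintype.linearIndependent_iff]
    intro cc hcc
    rw [Fin.sum_univ_four] at hcc
    simp only [Matrix.cons_val_zero, Matrix.cons_val_one, Matrix.head_cons,
      Matrix.cons_val_two, Matrix.tail_cons, Matrix.cons_val_three] at hcc
    have h0 : cc 0 = 0 := by
      have := congrArg (fun z => B z f) hcc
      simpa [map_add, map_smul, LinearMap.add_apply, LinearMap.smul_apply, smul_eq_mul,
        halt, hef, hgf, hhf] using this
    have h1 : cc 1 = 0 := by
      have := congrArg (fun z => B e z) hcc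
      simpa [map_add, map_smul, smul_eq_mul, halt, hef, heg, heh] using this
    have h2 : cc 2 = 0 := by
      have := congrArg (fun z => B z h) hcc
      simpa [map_add, map_smul, LinearMap.add_apply, LinearMap.smul_apply, smul_eq_mul,
        halt, heh, hfh, hgh] using this
    have h3 : cc 3 = 0 := by
      have := congrArg (fun z => B g z) hcc
      simpa [map_add, map_smul, smul_eq_mul, halt, hge, hgf, hgh] using this
    intro i; fin_cases i <;> assumption
  have hfr : Fintype.card (Fin 4) = Module.finrank F (Fin 4 → F) := by
    simp [Module.finrank_pi]
  let bs : Module.Basis (Fin 4) F (Fin 4 → F) := basisOfLinearIndependentOfCardEqFinrank hli4 hfr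
  have decomp : ∀ x, x = B x f • e + B e x • f + B x h • g + B g x • h := by
    intro x
    have hye : B (x - (B x f • e + B e x • f + B x h • g + B g x • h)) e = 0 := by
      simp only [map_sub, map_add, map_smul, LinearMap.sub_apply, LinearMap.add_apply,
        LinearMap.smul_apply, smul_eq_mul, halt, hfe, hge, hhe]
      linear_combination skw e x
    have hyf : B (x - (B x f • e + B e x • f + B x h • g + B g x • h)) f = 0 := by
      simp only [map_sub, map_add, map_smul, LinearMap.sub_apply, LinearMap.add_apply,
        LinearMap.smul_apply, smul_eq_mul, halt, hef, hgf, hhf]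
      ring
    have hyg : B (x - (B x f • e + B e x • f + B x h • g + B g x • h)) g = 0 := by
      simp only [map_sub, map_add, map_smul, LinearMap.sub_apply, LinearMap.add_apply,
        LinearMap.smul_apply, smul_eq_mul, halt, heg, hfg, hhg]
      linear_combination skw g x
    have hyh : B (x - (B x f • e + B e x • f + B x h • g + B g x • h)) h = 0 := by
      simp only [map_sub, map_add, map_smul, LinearMap.sub_apply, LinearMap.add_apply,
        LinearMap.smul_apply, smul_eq_mul, halt, heh, hfh, hgh]
      ring
    have hBy : B (x - (B x f • e + B e x • f + B x h • g + B g x • h)) = 0 := by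
      apply bs.ext
      intro i
      have hbs : ∀ j, bs j = ![e, f, g, h] j := fun j => by
        simp [bs, coe_basisOfLinearIndependentOfCardEqFinrank]
      rw [hbs i, LinearMap.zero_apply]
      fin_cases i
      · exact hye
      · exact hyf
      · exact hyg
      · exact hyh
    have hy0 : x - (B x f • e + B e x • f + B x h • g + B g x • h) = 0 :=
      hnd _ (fun w => by rw [hBy]; rfl)
    exact sub_eq_zero.mp hy0
  have Bxy : ∀ x y, B x y
      = B y f * B x e + B e y * B x f + B y h * B x g + B g y * B x h := by
    intro x y
    conv_lhs => rw [decomp y]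
    simp only [map_add, map_smul, smul_eq_mul]
    try ring
  -- membership in the two planes
  have memW₁ : ∀ x, x ∈ Submodule.span F {e, f} ↔ (B x h = 0 ∧ B g x = 0) := by
    intro x
    constructor
    · intro hx
      obtain ⟨a, b, rfl⟩ := Submodule.mem_span_pair.mp hx
      constructor
      · simp [map_add, map_smul, LinearMap.add_apply, LinearMap.smul_apply, smul_eq_mul,
          heh, hfh]
      · simp [map_add, map_smul, smul_eq_mul, hge, hgf]
    · rintro ⟨h1, h2⟩
      have hd := decomp x
      rw [h1, h2] at hd
      simp only [zero_smul, add_zero] at hd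
      exact Submodule.mem_span_pair.mpr ⟨_, _, hd.symm⟩
  have memW₂ : ∀ x, x ∈ Submodule.span F {g, h} ↔ (B x f = 0 ∧ B e x = 0) := by
    intro x
    constructor
    · intro hx
      obtain ⟨a, b, rfl⟩ := Submodule.mem_span_pair.mp hx
      constructor
      · simp [map_add, map_smul, LinearMap.add_apply, LinearMap.smul_apply, smul_eq_mul,
          hgf, hhf]
      · simp [map_add, map_smul, smul_eq_mul, heg, heh]
    · rintro ⟨h1, h2⟩
      have hd := decomp x
      rw [h1, h2] at hd
      simp only [zero_smul, zero_add, add_zero] at hd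
      exact Submodule.mem_span_pair.mpr ⟨_, _, hd.symm⟩
  have hW₁W₂ : ∀ x, x ∈ Submodule.span F {e, f} → x ∈ Submodule.span F {g, h} → x = 0 := by
    intro x h1 h2
    obtain ⟨ha, hb⟩ := (memW₁ x).mp h1
    obtain ⟨hc, hd⟩ := (memW₂ x).mp h2
    have := decomp x
    rw [ha, hb, hc, hd] at this
    simpa using this
  -- the two sets of points
  set T₀ : Set (Pt F) := {p | p.1 ≤ Submodule.span F {e, f}} with hT₀def
  set T₁ : Set (Pt F) := {p | p.1 ≤ Submodule.span F {g, h}} with hT₁def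
  have hmemT₀ : ∀ {v : Fin 4 → F} (hv : v ≠ 0),
      pt hv ∈ T₀ ↔ v ∈ Submodule.span F {e, f} := by
    intro v hv
    rw [hT₀def]
    simp only [Set.mem_setOf_eq, pt_fst, Submodule.span_singleton_le_iff_mem]
  have hmemT₁ : ∀ {v : Fin 4 → F} (hv : v ≠ 0),
      pt hv ∈ T₁ ↔ v ∈ Submodule.span F {g, h} := by
    intro v hv
    rw [hT₁def]
    simp only [Set.mem_setOf_eq, pt_fst, Submodule.span_singleton_le_iff_mem]
  have hdisj : Disjoint T₀ T₁ := by
    rw [Set.disjoint_left]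
    intro p hp0 hp1
    obtain ⟨v, hv0, rfl⟩ := exists_gen p
    exact hv0 (hW₁W₂ v ((hmemT₀ hv0).mp hp0) ((hmemT₁ hv0).mp hp1))
  have hli_ef : LinearIndependent F ![e, f] := by
    rw [LinearIndependent.pair_iff]
    intro s t hst
    constructor
    · have := congrArg (fun z => B z f) hst
      simpa [map_add, map_smul, LinearMap.add_apply, LinearMap.smul_apply, smul_eq_mul,
        halt, hef] using this
    · have := congrArg (fun z => B e z) hst
      simpa [map_add, map_smul, smul_eq_mul, halt, hef] using this
  have hli_gh : LinearIndependent F ![g, h] := by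
    rw [LinearIndependent.pair_iff]
    intro s t hst
    constructor
    · have := congrArg (fun z => B z h) hst
      simpa [map_add, map_smul, LinearMap.add_apply, LinearMap.smul_apply, smul_eq_mul,
        halt, hgh] using this
    · have := congrArg (fun z => B g z) hst
      simpa [map_add, map_smul, smul_eq_mul, halt, hgh] using this
  have hcard0 := plane_points hli_ef
  have hcard1 := plane_points hli_gh
  -- adjacency between the planes
  have adj01 : ∀ p ∈ T₀, ∀ r ∈ T₁, (sp B).Adj p r := by
    intro p hp r hr
    have hne : p ≠ r := by
      rintro rfl; exact (Set.disjoint_left.mp hdisj hp) hr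
    refine ⟨hne, ?_, ?_⟩
    · intro u hu v hv
      obtain ⟨hu1, hu2⟩ := (memW₁ u).mp (hp hu)
      obtain ⟨hv1, hv2⟩ := (memW₂ v).mp (hr hv)
      rw [Bxy u v, hv1, hv2, hu1, skw g u, hu2]
      ring
    · intro u hu v hv
      obtain ⟨hu1, hu2⟩ := (memW₂ u).mp (hr hu)
      obtain ⟨hv1, hv2⟩ := (memW₁ v).mp (hp hv)
      rw [Bxy u v, hu1, hv1, hv2, skw e u, hu2]
      ring
  -- proportionality within each plane
  have propW₁ : ∀ v w, v ∈ Submodule.span F {e, f} → w ∈ Submodule.span F {e, f} →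
      v ≠ 0 → B v w = 0 → ∃ c : F, w = c • v := by
    intro v w hv hw hv0 hB
    obtain ⟨hv1, hv2⟩ := (memW₁ v).mp hv
    obtain ⟨hw1, hw2⟩ := (memW₁ w).mp hw
    have hvd : v = B v f • e + B e v • f := by
      have := decomp v; rw [hv1, hv2] at this; simpa using this
    have hwd : w = B w f • e + B e w • f := by
      have := decomp w; rw [hw1, hw2] at this; simpa using this
    refine prop2 hvd hwd ?_ hv0
    have hB2 := Bxy v w
    rw [hB, hw1, hw2, skw e v] at hB2
    linear_combination -hB2
  have propW₂ : ∀ v w, v ∈ Submodule.span F {g, h} → w ∈ Submodule.span F {g, h} →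
      v ≠ 0 → B v w = 0 → ∃ c : F, w = c • v := by
    intro v w hv hw hv0 hB
    obtain ⟨hv1, hv2⟩ := (memW₂ v).mp hv
    obtain ⟨hw1, hw2⟩ := (memW₂ w).mp hw
    have hvd : v = B v h • g + B g v • h := by
      have := decomp v; rw [hv1, hv2] at this; simpa using this
    have hwd : w = B w h • g + B g w • h := by
      have := decomp w; rw [hw1, hw2] at this; simpa using this
    refine prop2 hvd hwd ?_ hv0
    have hB2 := Bxy v w
    rw [hB, hw1, hw2, skw g v] at hB2
    linear_combination -hB2
  have nadj00 : ∀ p ∈ T₀, ∀ r ∈ T₀, ¬ (sp B).Adj p r := by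
    rintro p hp r hr ⟨hne, hB1, -⟩
    obtain ⟨v, hv0, rfl⟩ := exists_gen p
    obtain ⟨w, hw0, rfl⟩ := exists_gen r
    have hvW := (hmemT₀ hv0).mp hp
    have hwW := (hmemT₀ hw0).mp hr
    have hBvw : B v w = 0 := hB1 v (Submodule.mem_span_singleton_self v)
      w (Submodule.mem_span_singleton_self w)
    obtain ⟨c, hc⟩ := propW₁ v w hvW hwW hv0 hBvw
    exact hne (Subtype.ext (span_eq_span hw0 hc).symm)
  have nadj11 : ∀ p ∈ T₁, ∀ r ∈ T₁, ¬ (sp B).Adj p r := by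
    rintro p hp r hr ⟨hne, hB1, -⟩
    obtain ⟨v, hv0, rfl⟩ := exists_gen p
    obtain ⟨w, hw0, rfl⟩ := exists_gen r
    have hvW := (hmemT₁ hv0).mp hp
    have hwW := (hmemT₁ hw0).mp hr
    have hBvw : B v w = 0 := hB1 v (Submodule.mem_span_singleton_self v)
      w (Submodule.mem_span_singleton_self w)
    obtain ⟨c, hc⟩ := propW₂ v w hvW hwW hv0 hBvw
    exact hne (Subtype.ext (span_eq_span hw0 hc).symm)
  rw [← hT₀def] at hcard0
  rw [← hT₁def] at hcard1
  refine ⟨⟨T₀, T₁, hdisj, by rw [hcard0.2, hq], by rw [hcard1.2, hq], adj01, nadj00, nadj11⟩, ?_⟩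
  set fE : Pt F → ℝ := fun p => if p ∈ T₀ then 1 else if p ∈ T₁ then -1 else 0 with hfEdef
  have hfody : ∀ p ∈ T₀, fE p = 1 := fun p hp => by simp [hfEdef, hp]
  have hf1 : ∀ p ∈ T₁, fE p = -1 := fun p hp => by
    have hn : p ∉ T₀ := fun hc => (Set.disjoint_left.mp hdisj hc) hp
    simp [hfEdef, hn, hp]
  have hfout : ∀ p, p ∉ T₀ → p ∉ T₁ → fE p = 0 := fun p h1 h2 => by simp [hfEdef, h1, h2]
  have hsupp : Function.support fE = T₀ ∪ T₁ := by
    ext p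
    simp only [Function.mem_support, Set.mem_union]
    by_cases h0 : p ∈ T₀ <;> by_cases h1 : p ∈ T₁ <;> simp [hfEdef, h0, h1]
  refine ⟨fE, ?_, ?_, ?_⟩
  · intro hcon
    have hptE : pt he0 ∈ T₀ := (hmemT₀ he0).mpr (Submodule.subset_span (by simp))
    have h1 := hfody _ hptE
    rw [hcon] at h1
    simpa using h1
  · intro u
    have hNS : ∀ S : Set (Pt F), S = {w | (sp B).Adj u w} ∩ (T₀ ∪ T₁) →
        ∑ᶠ w ∈ {w | (sp B).Adj u w}, fE w = ∑ᶠ w ∈ S, fE w := by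
      intro S hS
      rw [hS, ← hsupp, finsum_mem_inter_support]
    by_cases hu0 : u ∈ T₀
    · have hset : {w | (sp B).Adj u w} ∩ (T₀ ∪ T₁) = T₁ := by
        ext w
        constructor
        · rintro ⟨hadj, hw0 | hw1⟩
          · exact absurd hadj (nadj00 u hu0 w hw0)
          · exact hw1
        · intro hw1
          exact ⟨adj01 u hu0 w hw1, Or.inr hw1⟩
      rw [hNS T₁ hset.symm, finsum_mem_eq_finite_toFinset_sum _ hcard1.1]
      have hval : ∀ w ∈ hcard1.1.toFinset, fE w = -1 := fun w hw =>
        hf1 w (hcard1.1.mem_toFinset.mp hw)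
      have hcardT1 : hcard1.1.toFinset.card = q + 1 := by
        rw [← Set.ncard_eq_toFinset_card _ hcard1.1, hcard1.2, hq]
      rw [Finset.sum_congr rfl hval, Finset.sum_const, hcardT1, hfody u hu0, nsmul_eq_mul]
      push_cast
      ring
    · by_cases hu1 : u ∈ T₁
      · have hset : {w | (sp B).Adj u w} ∩ (T₀ ∪ T₁) = T₀ := by
          ext w
          constructor
          · rintro ⟨hadj, hw0 | hw1⟩
            · exact hw0
            · exact absurd hadj (nadj11 u hu1 w hw1)
          · intro hw0
            exact ⟨((adj01 w hw0 u hu1).symm), Or.inl hw0⟩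
        rw [hNS T₀ hset.symm, finsum_mem_eq_finite_toFinset_sum _ hcard0.1]
        have hval : ∀ w ∈ hcard0.1.toFinset, fE w = 1 := fun w hw =>
          hfody w (hcard0.1.mem_toFinset.mp hw)
        have hcardT0 : hcard0.1.toFinset.card = q + 1 := by
          rw [← Set.ncard_eq_toFinset_card _ hcard0.1, hcard0.2, hq]
        rw [Finset.sum_congr rfl hval, Finset.sum_const, hcardT0, hf1 u hu1, nsmul_eq_mul]
        push_cast
        ring
      · obtain ⟨x, hx0, rfl⟩ := exists_gen u
        have hxW1 : x ∉ Submodule.span F {e, f} := fun hc => hu0 ((hmemT₀ hx0).mpr hc)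
        have hxW2 : x ∉ Submodule.span F {g, h} := fun hc => hu1 ((hmemT₁ hx0).mpr hc)
        have hxsum : x = (B x f • e + B e x • f) + (B x h • g + B g x • h) := by
          conv_lhs => rw [decomp x]
          abel
        have hx₁mem : (B x f • e + B e x • f) ∈ Submodule.span F {e, f} :=
          Submodule.mem_span_pair.mpr ⟨_, _, rfl⟩
        have hx₂mem : (B x h • g + B g x • h) ∈ Submodule.span F {g, h} :=
          Submodule.mem_span_pair.mpr ⟨_, _, rfl⟩
        have hx₁0 : (B x f • e + B e x • f) ≠ 0 := by
          intro hc
          apply hxW2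
          rw [hxsum, hc, zero_add]
          exact hx₂mem
        have hx₂0 : (B x h • g + B g x • h) ≠ 0 := by
          intro hc
          apply hxW1
          rw [hxsum, hc, add_zero]
          exact hx₁mem
        have hBxx₁ : B x (B x f • e + B e x • f) = 0 := by
          simp only [map_add, map_smul, smul_eq_mul]
          rw [skw e x]
          ring
        have hBxx₂ : B x (B x h • g + B g x • h) = 0 := by
          simp only [map_add, map_smul, smul_eq_mul]
          rw [skw g x]
          ring
        have hT₀x₁ : pt hx₁0 ∈ T₀ := (hmemT₀ hx₁0).mpr hx₁mem
        have hT₁x₂ : pt hx₂0 ∈ T₁ := (hmemT₁ hx₂0).mpr hx₂mem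
        have hadj1 : (sp B).Adj (pt hx0) (pt hx₁0) := by
          refine ⟨?_, ?_, ?_⟩
          · intro hc
            apply hxW1
            have hsp : Submodule.span F {x} = Submodule.span F {B x f • e + B e x • f} :=
              congrArg Subtype.val hc
            obtain ⟨t, ht⟩ := Submodule.mem_span_singleton.mp
              (hsp ▸ Submodule.mem_span_singleton_self x)
            rw [← ht]
            exact Submodule.smul_mem _ _ hx₁mem
          · intro u' hu' v' hv'
            obtain ⟨s, rfl⟩ := Submodule.mem_span_singleton.mp hu'
            obtain ⟨t, rfl⟩ := Submodule.mem_span_singleton.mp hv'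
            simp only [map_smul, LinearMap.smul_apply, smul_eq_mul, hBxx₁]
            ring
          · intro u' hu' v' hv'
            obtain ⟨s, rfl⟩ := Submodule.mem_span_singleton.mp hu'
            obtain ⟨t, rfl⟩ := Submodule.mem_span_singleton.mp hv'
            have hz : B (B x f • e + B e x • f) x = 0 := by
              rw [skw, hBxx₁, neg_zero]
            simp only [map_smul, LinearMap.smul_apply, smul_eq_mul, hz]
            ring
        have hadj2 : (sp B).Adj (pt hx0) (pt hx₂0) := by
          refine ⟨?_, ?_, ?_⟩
          · intro hc
            apply hxW2
            have hsp : Submodule.span F {x} = Submodule.span F {B x h • g + B g x • h} :=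
              congrArg Subtype.val hc
            obtain ⟨t, ht⟩ := Submodule.mem_span_singleton.mp
              (hsp ▸ Submodule.mem_span_singleton_self x)
            rw [← ht]
            exact Submodule.smul_mem _ _ hx₂mem
          · intro u' hu' v' hv'
            obtain ⟨s, rfl⟩ := Submodule.mem_span_singleton.mp hu'
            obtain ⟨t, rfl⟩ := Submodule.mem_span_singleton.mp hv'
            simp only [map_smul, LinearMap.smul_apply, smul_eq_mul, hBxx₂]
            ring
          · intro u' hu' v' hv'
            obtain ⟨s, rfl⟩ := Submodule.mem_span_singleton.mp hu'
            obtain ⟨t, rfl⟩ := Submodule.mem_span_singleton.mp hv'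
            have hz : B (B x h • g + B g x • h) x = 0 := by
              rw [skw, hBxx₂, neg_zero]
            simp only [map_smul, LinearMap.smul_apply, smul_eq_mul, hz]
            ring
        have hne12 : pt hx₁0 ≠ pt hx₂0 := by
          intro hc
          apply hx₁0
          apply hW₁W₂ _ hx₁mem
          have hsp : Submodule.span F {B x f • e + B e x • f}
              = Submodule.span F {B x h • g + B g x • h} := congrArg Subtype.val hc
          obtain ⟨t, ht⟩ := Submodule.mem_span_singleton.mp
            (hsp ▸ Submodule.mem_span_singleton_self (B x f • e + B e x • f))
          rw [← ht]
          exact Submodule.smul_mem _ _ hx₂mem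
        have hset : {w | (sp B).Adj (pt hx0) w} ∩ (T₀ ∪ T₁)
            = {pt hx₁0, pt hx₂0} := by
          ext r
          constructor
          · rintro ⟨hadj, hr0 | hr1⟩
            · obtain ⟨y, hy0, rfl⟩ := exists_gen r
              have hyW := (hmemT₀ hy0).mp hr0
              have hBxy : B x y = 0 := hadj.2.1 x (Submodule.mem_span_singleton_self x)
                y (Submodule.mem_span_singleton_self y)
              obtain ⟨hy1, hy2⟩ := (memW₁ y).mp hyW
              have hyd : y = B y f • e + B e y • f := by
                have := decomp y; rw [hy1, hy2] at this; simpa using this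
              have hdet : B x f * B e y = B y f * B e x := by
                have hB2 := Bxy x y
                rw [hBxy, hy1, hy2, skw e x] at hB2
                linear_combination -hB2
              obtain ⟨c, hc⟩ := prop2 rfl hyd hdet hx₁0
              have : pt hy0 = pt hx₁0 := Subtype.ext (span_eq_span hy0 hc)
              rw [this]
              exact Set.mem_insert _ _
            · obtain ⟨y, hy0, rfl⟩ := exists_gen r
              have hyW := (hmemT₁ hy0).mp hr1
              have hBxy : B x y = 0 := hadj.2.1 x (Submodule.mem_span_singleton_self x)
                y (Submodule.mem_span_singleton_self y)
              obtain ⟨hy1, hy2⟩ := (memW₂ y).mp hyW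
              have hyd : y = B y h • g + B g y • h := by
                have := decomp y; rw [hy1, hy2] at this; simpa using this
              have hdet : B x h * B g y = B y h * B g x := by
                have hB2 := Bxy x y
                rw [hBxy, hy1, hy2, skw g x] at hB2
                linear_combination -hB2
              obtain ⟨c, hc⟩ := prop2 rfl hyd hdet hx₂0
              have : pt hy0 = pt hx₂0 := Subtype.ext (span_eq_span hy0 hc)
              rw [this]
              exact Set.mem_insert_of_mem _ rfl
          · intro hr
            rcases hr with rfl | hr
            · exact ⟨hadj1, Or.inl hT₀x₁⟩
            · rw [Set.mem_singleton_iff] at hr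
              subst hr
              exact ⟨hadj2, Or.inr hT₁x₂⟩
        rw [hNS _ hset.symm, finsum_mem_pair hne12, hfody _ hT₀x₁, hf1 _ hT₁x₂,
          hfout _ hu0 hu1]
        ring
  · rw [hsupp, Set.ncard_union_eq hdisj hcard0.1 hcard1.1, hcard0.2, hcard1.2, hq]
    ring

end Main

open Stmt7 in
/-- Sp(4,q) contains an induced K_{q+1,q+1}; consequently it has an
eigenfunction for the eigenvalue −(q+1) whose support has exactly 2(q+1) elements,
meeting the weight-distribution bound. -/
theorem stmt7 {F : Type*} [Field F] [Fintype F] (q : ℕ)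
    (hq : Fintype.card F = q) (hodd : Odd q)
    (B : LinearMap.BilinForm F (Fin 4 → F))
    (halt : ∀ v, B v v = 0)
    (hnd : ∀ v, (∀ w, B v w = 0) → v = 0) :
    (∃ T₀ T₁ : Set (Pt F), Disjoint T₀ T₁ ∧
      T₀.ncard = q + 1 ∧ T₁.ncard = q + 1 ∧
      (∀ x ∈ T₀, ∀ y ∈ T₁, (sp B).Adj x y) ∧
      (∀ x ∈ T₀, ∀ y ∈ T₀, ¬ (sp B).Adj x y) ∧
      (∀ x ∈ T₁, ∀ y ∈ T₁, ¬ (sp B).Adj x y)) ∧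
    (∃ f : Pt F → ℝ, f ≠ 0 ∧
      (∀ u, (-(q + 1 : ℝ)) * f u = ∑ᶠ w ∈ {w | (sp B).Adj u w}, f w) ∧
      (Function.support f).ncard = 2 * (q + 1)) := by
  classical
  have skw : ∀ v w, B w v = - B v w := skewB B halt
  -- construct a symplectic basis e, f, g, h
  set e : Fin 4 → F := Pi.single 0 1 with hedef
  have he0 : e ≠ 0 := by
    intro hc
    have := congrFun hc 0
    rw [hedef] at this
    simp at this
  obtain ⟨w, hw⟩ : ∃ w, B e w ≠ 0 := by
    by_contra hc
    push_neg at hc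
    exact he0 (hnd e hc)
  set f : Fin 4 → F := (B e w)⁻¹ • w with hfdef
  have hef : B e f = 1 := by
    rw [hfdef, map_smul, smul_eq_mul, inv_mul_cancel₀ hw]
  -- find a vector outside the span of e, f
  have hproj : ∃ i : Fin 4, (Pi.single i 1 : Fin 4 → F)
      - (B (Pi.single i 1) f • e + B e (Pi.single i 1) • f) ≠ 0 := by
    by_contra hc
    push_neg at hc
    have hmem : ∀ i : Fin 4, (Pi.single i 1 : Fin 4 → F) ∈ Submodule.span F {e, f} := by
      intro i
      have := sub_eq_zero.mp (hc i)
      rw [this]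
      exact Submodule.mem_span_pair.mpr ⟨_, _, rfl⟩
    have htop : (⊤ : Submodule F (Fin 4 → F)) ≤ Submodule.span F {e, f} := by
      rw [← (Pi.basisFun F (Fin 4)).span_eq]
      rw [Submodule.span_le]
      rintro z ⟨i, rfl⟩
      rw [Pi.basisFun_apply]
      exact hmem i
    have h4 : Module.finrank F (Fin 4 → F) ≤ 2 := by
      calc Module.finrank F (Fin 4 → F)
          = Module.finrank F (⊤ : Submodule F (Fin 4 → F)) := (finrank_top F _).symm
        _ ≤ Module.finrank F (Submodule.span F ({e, f} : Set (Fin 4 → F))) :=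
            Submodule.finrank_mono htop
        _ ≤ ({e, f} : Set (Fin 4 → F)).toFinset.card := finrank_span_le_card _
        _ ≤ 2 := by
            rw [Set.toFinset_insert, Set.toFinset_singleton]
            exact (Finset.card_insert_le _ _).trans (by simp)
    rw [Module.finrank_pi] at h4
    simp at h4
  obtain ⟨i, hi⟩ := hproj
  set g : Fin 4 → F := (Pi.single i 1 : Fin 4 → F)
      - (B (Pi.single i 1) f • e + B e (Pi.single i 1) • f) with hgdef
  have hg0 : g ≠ 0 := hi
  have hee : B e e = 0 := halt e
  have hff : B f f = 0 := halt f
  have heg : B e g = 0 := by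
    rw [hgdef]
    simp only [map_sub, map_add, map_smul, smul_eq_mul, hee, hef]
    ring
  have hfg : B f g = 0 := by
    rw [hgdef]
    simp only [map_sub, map_add, map_smul, smul_eq_mul, hff]
    rw [skw e f, hef]
    linear_combination skw (Pi.single i 1) f
  obtain ⟨w', hw'⟩ : ∃ w', B g w' ≠ 0 := by
    by_contra hc
    push_neg at hc
    exact hg0 (hnd g hc)
  have hge : B g e = 0 := by rw [skw, heg, neg_zero]
  have hgf : B g f = 0 := by rw [skw, hfg, neg_zero]
  have hgh0 : B g (w' - (B w' f • e + B e w' • f)) = B g w' := by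
    simp only [map_sub, map_add, map_smul, smul_eq_mul, hge, hgf]
    ring
  set h : Fin 4 → F := (B g (w' - (B w' f • e + B e w' • f)))⁻¹
      • (w' - (B w' f • e + B e w' • f)) with hhdef
  have hBgh0 : B g (w' - (B w' f • e + B e w' • f)) ≠ 0 := by rw [hgh0]; exact hw'
  have hgh : B g h = 1 := by
    rw [hhdef, map_smul, smul_eq_mul, inv_mul_cancel₀ hBgh0]
  have heh : B e h = 0 := by
    rw [hhdef, map_smul, smul_eq_mul]
    have : B e (w' - (B w' f • e + B e w' • f)) = 0 := by
      simp only [map_sub, map_add, map_smul, smul_eq_mul, hee, hef]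
      ring
    rw [this, mul_zero]
  have hfh : B f h = 0 := by
    rw [hhdef, map_smul, smul_eq_mul]
    have : B f (w' - (B w' f • e + B e w' • f)) = 0 := by
      simp only [map_sub, map_add, map_smul, smul_eq_mul, hff]
      rw [skw e f, hef]
      linear_combination skw w' f
    rw [this, mul_zero]
  exact main_lemma q hq B halt hnd e f g h hef hgh heg heh hfg hfh
end

section
/- Let G be a primitive strongly regular graph with eigenvalues k > r > s and let f be an eigenfunction of G for the eigenvalue s. Then f has at least −2s nonzero values. Likewise, any eigenfunction for the eigenvalue r has at least 2(r+1) nonzero values. -/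
open Finset

set_option linter.unusedSectionVars false

namespace Stmt8Aux

variable {V : Type*} [Fintype V] [DecidableEq V]
  (G : SimpleGraph V) [DecidableRel G.Adj]

lemma core (f : V → ℝ) (u : V) (M : ℝ) (hMf : ∀ w, f w ≤ M) :
    ∑ w ∈ G.neighborFinset u, f w
      ≤ (((G.neighborFinset u).filter (fun w => 0 < f w)).card : ℝ) * M := by
  rw [← Finset.sum_filter_add_sum_filter_not (G.neighborFinset u) (fun w => 0 < f w) f]
  have h1 : ∑ w ∈ (G.neighborFinset u).filter (fun w => 0 < f w), f w
      ≤ (((G.neighborFinset u).filter (fun w => 0 < f w)).card : ℝ) * M := by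
    calc ∑ w ∈ (G.neighborFinset u).filter (fun w => 0 < f w), f w
        ≤ ∑ _w ∈ (G.neighborFinset u).filter (fun w => 0 < f w), M :=
          Finset.sum_le_sum (fun w _ => hMf w)
      _ = _ := by rw [Finset.sum_const, nsmul_eq_mul]
  have h2 : ∑ w ∈ (G.neighborFinset u).filter (fun w => ¬ 0 < f w), f w ≤ 0 :=
    Finset.sum_nonpos (fun w hw => le_of_not_gt (Finset.mem_filter.mp hw).2)
  linarith

lemma double_count (k : ℕ) (hreg : G.IsRegularOfDegree k) (f : V → ℝ) :
    ∑ u, ∑ w ∈ G.neighborFinset u, f w = (k : ℝ) * ∑ u, f u := by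
  have h : ∀ u : V, ∑ w ∈ G.neighborFinset u, f w
      = ∑ w, if G.Adj u w then f w else 0 := by
    intro u
    rw [SimpleGraph.neighborFinset_eq_filter, Finset.sum_filter]
  simp_rw [h]
  rw [Finset.sum_comm]
  have h2 : ∀ w : V, (∑ u, if G.Adj u w then f w else 0) = (k : ℝ) * f w := by
    intro w
    rw [← Finset.sum_filter]
    have hfil : (univ.filter fun u => G.Adj u w) = G.neighborFinset w := by
      ext x
      simp [SimpleGraph.adj_comm]
    rw [hfil, Finset.sum_const, nsmul_eq_mul]
    have : (G.neighborFinset w).card = k := by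
      rw [SimpleGraph.card_neighborFinset_eq_degree]; exact hreg w
    rw [this]
  simp_rw [h2]
  rw [← Finset.mul_sum]

lemma lam_succ_le {v k lam mu : ℕ} (h : G.IsSRGWith v k lam mu) {a b : V}
    (hab : G.Adj a b) : lam + 1 ≤ k := by
  have hcard := h.of_adj a b hab
  have hsub : (G.commonNeighbors a b).toFinset ⊆ (G.neighborFinset a).erase b := by
    intro x hx
    rw [Set.mem_toFinset, SimpleGraph.mem_commonNeighbors] at hx
    rw [Finset.mem_erase, SimpleGraph.mem_neighborFinset]
    refine ⟨?_, hx.1⟩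
    rintro rfl
    exact G.irrefl hx.2
  have hb : b ∈ G.neighborFinset a := by rwa [SimpleGraph.mem_neighborFinset]
  have hle := Finset.card_le_card hsub
  rw [Finset.card_erase_of_mem hb, Set.toFinset_card, hcard] at hle
  have hdeg : (G.neighborFinset a).card = k := by
    rw [SimpleGraph.card_neighborFinset_eq_degree]; exact h.regular a
  rw [hdeg] at hle
  have hk1 : 1 ≤ k := by
    have := Finset.card_pos.mpr ⟨b, hb⟩
    omega
  omega

lemma support_card (f : V → ℝ) :
    ((Function.support f).ncard : ℝ) = ((univ.filter fun w => f w ≠ 0).card : ℝ) := by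
  have : Function.support f = ↑(univ.filter fun w => f w ≠ 0) := by
    ext x; simp [Function.mem_support]
  rw [this, Set.ncard_coe_finset]

lemma pn_le_support (f : V → ℝ) :
    ((univ.filter fun w => 0 < f w).card : ℝ) + ((univ.filter fun w => f w < 0).card : ℝ)
      ≤ ((Function.support f).ncard : ℝ) := by
  rw [support_card]
  have hdisj : Disjoint (univ.filter fun w => 0 < f w) (univ.filter fun w => f w < 0) := by
    rw [Finset.disjoint_left]
    intro a ha hb
    rw [Finset.mem_filter] at ha hb
    linarith [ha.2, hb.2]
  have hsub : (univ.filter fun w => 0 < f w) ∪ (univ.filter fun w => f w < 0)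
      ⊆ univ.filter fun w => f w ≠ 0 := by
    intro x hx
    simp only [Finset.mem_union, Finset.mem_filter] at hx
    rw [Finset.mem_filter]
    rcases hx with hx | hx
    · exact ⟨mem_univ x, ne_of_gt hx.2⟩
    · exact ⟨mem_univ x, ne_of_lt hx.2⟩
  have := Finset.card_le_card hsub
  rw [Finset.card_union_of_disjoint hdisj] at this
  exact_mod_cast this

lemma s_bound (s : ℝ) (hs : s < 0) (f : V → ℝ) (hf : f ≠ 0)
    (heig : ∀ u, s * f u = ∑ w ∈ G.neighborFinset u, f w) :
    -2 * s ≤ ((Function.support f).ncard : ℝ) := by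
  obtain ⟨u0, hu0⟩ := Function.ne_iff.mp hf
  obtain ⟨umax, -, hmax⟩ := Finset.exists_max_image univ f ⟨u0, mem_univ u0⟩
  obtain ⟨umin, -, hmin⟩ := Finset.exists_min_image univ f ⟨u0, mem_univ u0⟩
  have hmax' : ∀ w, f w ≤ f umax := fun w => hmax w (mem_univ w)
  have hmin' : ∀ w, f umin ≤ f w := fun w => hmin w (mem_univ w)
  have hpos : 0 < f umax := by
    by_contra hle
    push_neg at hle
    have hall : ∀ w, f w ≤ 0 := fun w => (hmax' w).trans hle
    have h0 : f umin < 0 := lt_of_le_of_lt (hmin' u0) (lt_of_le_of_ne (hall u0) hu0)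
    have h1 : (0:ℝ) < s * f umin := mul_pos_of_neg_of_neg hs h0
    have h2 : ∑ w ∈ G.neighborFinset umin, f w ≤ 0 :=
      Finset.sum_nonpos fun w _ => hall w
    rw [heig umin] at h1; linarith
  have hneg : f umin < 0 := by
    by_contra hle
    push_neg at hle
    have hall : ∀ w, 0 ≤ f w := fun w => le_trans hle (hmin' w)
    have h0 : 0 < f umax :=
      lt_of_lt_of_le (lt_of_le_of_ne (hall u0) (Ne.symm hu0)) (hmax' u0)
    have h1 : s * f umax < 0 := mul_neg_of_neg_of_pos hs h0
    have h2 : (0:ℝ) ≤ ∑ w ∈ G.neighborFinset umax, f w :=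
      Finset.sum_nonneg fun w _ => hall w
    rw [heig umax] at h1; linarith
  set P := univ.filter fun w => 0 < f w with hP
  set N := univ.filter fun w => f w < 0 with hN
  -- bound 1 : (N.card) * f umin ≤ s * f umax
  have hb1 : (N.card : ℝ) * f umin ≤ s * f umax := by
    have hcore := core G (fun w => -f w) umax (-f umin) (fun w => by simpa using hmin' w)
    have hsub : ((G.neighborFinset umax).filter fun w => 0 < -f w) ⊆ N := by
      intro x hx
      rw [Finset.mem_filter] at hx
      rw [hN, Finset.mem_filter]
      exact ⟨mem_univ x, by linarith [hx.2]⟩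
    have hcle : (((G.neighborFinset umax).filter fun w => 0 < -f w).card : ℝ) ≤ N.card := by
      exact_mod_cast Finset.card_le_card hsub
    have hsum : ∑ w ∈ G.neighborFinset umax, -f w = -(s * f umax) := by
      rw [Finset.sum_neg_distrib, heig umax]
    rw [hsum] at hcore
    nlinarith [mul_le_mul_of_nonneg_right hcle (by linarith : (0:ℝ) ≤ -f umin)]
  -- bound 2 : s * f umin ≤ (P.card) * f umax
  have hb2 : s * f umin ≤ (P.card : ℝ) * f umax := by
    have hcore := core G f umin (f umax) hmax'
    have hsub : ((G.neighborFinset umin).filter fun w => 0 < f w) ⊆ P := by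
      intro x hx
      rw [Finset.mem_filter] at hx
      rw [hP, Finset.mem_filter]
      exact ⟨mem_univ x, hx.2⟩
    have hcle : (((G.neighborFinset umin).filter fun w => 0 < f w).card : ℝ) ≤ P.card := by
      exact_mod_cast Finset.card_le_card hsub
    rw [← heig umin] at hcore
    nlinarith [mul_le_mul_of_nonneg_right hcle hpos.le]
  have hfin := pn_le_support f
  rw [← hP, ← hN] at hfin
  nlinarith [mul_le_mul_of_nonneg_right hb1 hpos.le,
    mul_le_mul_of_nonneg_right hb2 (by linarith : (0:ℝ) ≤ -f umin),
    mul_nonneg (by linarith : (0:ℝ) ≤ -s) (sq_nonneg (f umax + f umin)),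
    mul_pos hpos (by linarith : (0:ℝ) < -f umin)]

lemma r_bound (r : ℝ) (hr0 : 0 < r) (f : V → ℝ)
    (hexp : ∃ w, 0 < f w) (hexn : ∃ w, f w < 0)
    (heig : ∀ u, r * f u = ∑ w ∈ G.neighborFinset u, f w) :
    2 * (r + 1) ≤ ((Function.support f).ncard : ℝ) := by
  obtain ⟨w1, hw1⟩ := hexp
  obtain ⟨w2, hw2⟩ := hexn
  obtain ⟨umax, -, hmax⟩ := Finset.exists_max_image univ f ⟨w1, mem_univ w1⟩
  obtain ⟨umin, -, hmin⟩ := Finset.exists_min_image univ f ⟨w1, mem_univ w1⟩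
  have hmax' : ∀ w, f w ≤ f umax := fun w => hmax w (mem_univ w)
  have hmin' : ∀ w, f umin ≤ f w := fun w => hmin w (mem_univ w)
  have hpos : 0 < f umax := lt_of_lt_of_le hw1 (hmax' w1)
  have hneg : f umin < 0 := lt_of_le_of_lt (hmin' w2) hw2
  set P := univ.filter fun w => 0 < f w with hP
  set N := univ.filter fun w => f w < 0 with hN
  have humaxP : umax ∈ P := by rw [hP, Finset.mem_filter]; exact ⟨mem_univ _, hpos⟩
  have huminN : umin ∈ N := by rw [hN, Finset.mem_filter]; exact ⟨mem_univ _, hneg⟩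
  -- P.card ≥ r + 1
  have hb2 : r + 1 ≤ (P.card : ℝ) := by
    have hcore := core G f umax (f umax) hmax'
    have hsub : ((G.neighborFinset umax).filter fun w => 0 < f w) ⊆ P.erase umax := by
      intro x hx
      rw [Finset.mem_filter] at hx
      rw [Finset.mem_erase]
      refine ⟨?_, by rw [hP, Finset.mem_filter]; exact ⟨mem_univ x, hx.2⟩⟩
      rintro rfl
      have hadj := hx.1
      rw [SimpleGraph.mem_neighborFinset] at hadj
      exact G.irrefl hadj
    have hcle : (((G.neighborFinset umax).filter fun w => 0 < f w).card : ℝ)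
        ≤ (P.card : ℝ) - 1 := by
      have h1 := Finset.card_le_card hsub
      rw [Finset.card_erase_of_mem humaxP] at h1
      have h2 : 1 ≤ P.card := Finset.card_pos.mpr ⟨umax, humaxP⟩
      have : (((G.neighborFinset umax).filter fun w => 0 < f w).card : ℝ)
          ≤ ((P.card - 1 : ℕ) : ℝ) := by exact_mod_cast h1
      rwa [Nat.cast_sub h2, Nat.cast_one] at this
    rw [← heig umax] at hcore
    have := mul_le_mul_of_nonneg_right hcle hpos.le
    nlinarith
  -- N.card ≥ r + 1
  have hb1 : r + 1 ≤ (N.card : ℝ) := by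
    have hcore := core G (fun w => -f w) umin (-f umin) (fun w => by simpa using hmin' w)
    have hsub : ((G.neighborFinset umin).filter fun w => 0 < -f w) ⊆ N.erase umin := by
      intro x hx
      rw [Finset.mem_filter] at hx
      rw [Finset.mem_erase]
      refine ⟨?_, by rw [hN, Finset.mem_filter]; exact ⟨mem_univ x, by linarith [hx.2]⟩⟩
      rintro rfl
      have hadj := hx.1
      rw [SimpleGraph.mem_neighborFinset] at hadj
      exact G.irrefl hadj
    have hcle : (((G.neighborFinset umin).filter fun w => 0 < -f w).card : ℝ)
        ≤ (N.card : ℝ) - 1 := by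
      have h1 := Finset.card_le_card hsub
      rw [Finset.card_erase_of_mem huminN] at h1
      have h2 : 1 ≤ N.card := Finset.card_pos.mpr ⟨umin, huminN⟩
      have : (((G.neighborFinset umin).filter fun w => 0 < -f w).card : ℝ)
          ≤ ((N.card - 1 : ℕ) : ℝ) := by exact_mod_cast h1
      rwa [Nat.cast_sub h2, Nat.cast_one] at this
    have hsum : ∑ w ∈ G.neighborFinset umin, -f w = -(r * f umin) := by
      rw [Finset.sum_neg_distrib, heig umin]
    rw [hsum] at hcore
    have := mul_le_mul_of_nonneg_right hcle (by linarith : (0:ℝ) ≤ -f umin)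
    nlinarith
  have hfin := pn_le_support f
  rw [← hP, ← hN] at hfin
  linarith

end Stmt8Aux

/-- the weight-distribution bound: in a primitive strongly regular graph
with non-principal eigenvalues r > 0 > s, every s-eigenfunction has at least −2s
nonzero values and every r-eigenfunction has at least 2(r+1) nonzero values. -/
theorem stmt8 {V : Type*} [Fintype V] [DecidableEq V] (G : SimpleGraph V)
    [DecidableRel G.Adj]
    (v k lam mu : ℕ) (h : G.IsSRGWith v k lam mu)
    (hprim : 0 < mu ∧ mu < k)
    (r s : ℝ) (hsr : s < 0) (hr0 : 0 < r)
    (hr : r ^ 2 - ((lam : ℝ) - mu) * r - ((k : ℝ) - mu) = 0)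
    (hs : s ^ 2 - ((lam : ℝ) - mu) * s - ((k : ℝ) - mu) = 0) :
    (∀ f : V → ℝ, f ≠ 0 →
      (∀ u, s * f u = ∑ w ∈ G.neighborFinset u, f w) →
      -2 * s ≤ ((Function.support f).ncard : ℝ)) ∧
    (∀ f : V → ℝ, f ≠ 0 →
      (∀ u, r * f u = ∑ w ∈ G.neighborFinset u, f w) →
      2 * (r + 1) ≤ ((Function.support f).ncard : ℝ)) := by
  constructor
  · intro f hf heig
    exact Stmt8Aux.s_bound G s hsr f hf heig
  · intro f hf heig
    obtain ⟨u0, hu0⟩ := Function.ne_iff.mp hf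
    have hk2 : 1 ≤ k := by omega
    have hnb : (G.neighborFinset u0).Nonempty := by
      rw [← Finset.card_pos, SimpleGraph.card_neighborFinset_eq_degree, h.regular u0]
      omega
    obtain ⟨b, hbmem⟩ := hnb
    have hadj : G.Adj u0 b := by rwa [SimpleGraph.mem_neighborFinset] at hbmem
    have hlam : lam + 1 ≤ k := Stmt8Aux.lam_succ_le G h hadj
    have hrk : r ≠ (k : ℝ) := by
      intro heq
      rw [heq] at hr
      have hlam' : (lam : ℝ) + 1 ≤ k := by exact_mod_cast hlam
      have hmu1 : (1 : ℝ) ≤ mu := by exact_mod_cast hprim.1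
      have hk0 : (0 : ℝ) ≤ k := Nat.cast_nonneg k
      nlinarith [mul_le_mul_of_nonneg_right hlam' hk0]
    have hsum0 : ∑ u, f u = 0 := by
      have hdc := Stmt8Aux.double_count G k h.regular f
      have h1 : ∑ u, (r * f u) = ∑ u, ∑ w ∈ G.neighborFinset u, f w :=
        Finset.sum_congr rfl fun u _ => heig u
      rw [hdc, ← Finset.mul_sum] at h1
      have h2 : (r - (k : ℝ)) * ∑ u, f u = 0 := by linear_combination h1
      rcases mul_eq_zero.mp h2 with h3 | h3
      · exact absurd (by linarith : r = (k : ℝ)) hrk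
      · exact h3
    have hexp : ∃ w, 0 < f w := by
      by_contra hc
      push_neg at hc
      exact hu0 ((Finset.sum_eq_zero_iff_of_nonpos fun w _ => hc w).mp hsum0 u0
        (Finset.mem_univ u0))
    have hexn : ∃ w, f w < 0 := by
      by_contra hc
      push_neg at hc
      exact hu0 ((Finset.sum_eq_zero_iff_of_nonneg fun w _ => hc w).mp hsum0 u0
        (Finset.mem_univ u0))
    exact Stmt8Aux.r_bound G r hr0 f hexp hexn heig
end

section
/- Let G be a primitive strongly regular graph with smallest eigenvalue s < 0, and suppose f is an s-eigenfunction whose support has exactly −2s elements. Then the subgraph induced on the support of f is a complete bipartite graph with two parts T₀, T₁ each of size −s, and up to scaling f equals 1 on T₀ and −1 on T₁. -/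
open Finset

section Aux

variable {V : Type*} [Fintype V] [DecidableEq V]

private lemma exists_pos_aux (f : V → ℝ) (hf0 : f ≠ 0) (hsum : ∑ v, f v = 0) :
    ∃ x, 0 < f x := by
  by_contra hc
  push_neg at hc
  have hall : ∀ x ∈ (univ : Finset V), f x = 0 :=
    (Finset.sum_eq_zero_iff_of_nonpos (fun i _ => hc i)).mp hsum
  exact hf0 (funext fun x => hall x (mem_univ x))

private lemma sumPN_aux (f : V → ℝ) (hsum : ∑ v, f v = 0)
    (P N : Finset V) (hP : ∀ x, x ∈ P ↔ 0 < f x) (hN : ∀ x, x ∈ N ↔ f x < 0)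
    (hdisj : Disjoint P N) :
    ∑ w ∈ P, f w + ∑ w ∈ N, f w = 0 := by
  have hsub : P ∪ N ⊆ univ := subset_univ _
  have h0 : ∑ w ∈ univ \ (P ∪ N), f w = 0 := by
    apply Finset.sum_eq_zero
    intro x hx
    simp only [Finset.mem_sdiff, Finset.mem_union, hP, hN] at hx
    push_neg at hx
    linarith [hx.2.1, hx.2.2]
  have h1 := Finset.sum_sdiff (f := f) hsub
  rw [Finset.sum_union hdisj] at h1
  linarith

private lemma core_aux (G : SimpleGraph V) [DecidableRel G.Adj] (s : ℝ) (hs0 : s < 0)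
    (f : V → ℝ)
    (heig : ∀ u, s * f u = ∑ w ∈ G.neighborFinset u, f w)
    (hsum : ∑ v, f v = 0)
    (hex : ∃ x, 0 < f x)
    (P N : Finset V) (hP : ∀ x, x ∈ P ↔ 0 < f x) (hN : ∀ x, x ∈ N ↔ f x < 0) :
    -s ≤ (P.card : ℝ) ∧
      ((P.card : ℝ) = -s →
        ∃ a : ℝ, 0 < a ∧ (∀ p ∈ P, f p = a) ∧
          (∀ p ∈ P, ∀ q ∈ P, ¬ G.Adj p q) ∧
          (∀ p ∈ P, ∀ n ∈ N, G.Adj p n)) := by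
  obtain ⟨x, hx⟩ := hex
  obtain ⟨u, -, hmax⟩ := Finset.exists_max_image (univ : Finset V) f ⟨x, mem_univ x⟩
  set a := f u with ha_def
  have hmax' : ∀ w : V, f w ≤ a := fun w => hmax w (mem_univ w)
  have ha : 0 < a := lt_of_lt_of_le hx (hmax' x)
  have hSP : ∑ w ∈ P, f w ≤ a * P.card := by
    calc ∑ w ∈ P, f w ≤ ∑ _w ∈ P, a := Finset.sum_le_sum (fun i _ => hmax' i)
    _ = a * P.card := by rw [Finset.sum_const, nsmul_eq_mul, mul_comm]
  have hdisj : Disjoint P N := by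
    rw [Finset.disjoint_left]
    intro y hyP hyN
    rw [hP] at hyP; rw [hN] at hyN; linarith
  have hPN0 : ∑ w ∈ P, f w + ∑ w ∈ N, f w = 0 := sumPN_aux f hsum P N hP hN hdisj
  have chain1 : ∀ p : V, ∑ w ∈ (G.neighborFinset p).filter (fun w => f w < 0), f w
      ≤ ∑ w ∈ G.neighborFinset p, f w := by
    intro p
    have h1 := Finset.sum_filter_add_sum_filter_not (G.neighborFinset p) (fun w => f w < 0) f
    have h2 : 0 ≤ ∑ w ∈ (G.neighborFinset p).filter (fun w => ¬ f w < 0), f w :=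
      Finset.sum_nonneg (by
        intro i hi
        simp only [Finset.mem_filter] at hi
        exact not_lt.mp hi.2)
    linarith
  have hsubN : ∀ p : V, (G.neighborFinset p).filter (fun w => f w < 0) ⊆ N := by
    intro p w hw
    simp only [Finset.mem_filter] at hw
    exact (hN w).mpr hw.2
  have chain2 : ∀ p : V, ∑ w ∈ N, f w
      ≤ ∑ w ∈ (G.neighborFinset p).filter (fun w => f w < 0), f w := by
    intro p
    have h1 := Finset.sum_sdiff (f := f) (hsubN p)
    have h2 : ∑ w ∈ N \ (G.neighborFinset p).filter (fun w => f w < 0), f w ≤ 0 :=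
      Finset.sum_nonpos (fun i hi => le_of_lt ((hN i).mp (Finset.mem_sdiff.mp hi).1))
    linarith
  have hmain : -s ≤ (P.card : ℝ) := by
    have h1 := heig u
    have h2 := chain1 u
    have h3 := chain2 u
    have h4 : -(a * P.card) ≤ s * a := by linarith
    nlinarith [ha, h4]
  refine ⟨hmain, fun hcard => ?_⟩
  have heq1 : ∑ w ∈ P, f w = a * P.card := by
    have h1 := heig u
    have h2 := chain1 u
    have h3 := chain2 u
    rw [hcard]
    have h4 : -s * a ≤ ∑ w ∈ P, f w := by linarith
    rw [hcard] at hSP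
    linarith
  have hfa : ∀ p ∈ P, f p = a := by
    intro p hp
    have hz : ∑ w ∈ P, (a - f w) = 0 := by
      rw [Finset.sum_sub_distrib, Finset.sum_const, nsmul_eq_mul, heq1]; ring
    have := (Finset.sum_eq_zero_iff_of_nonneg
      (fun i _ => sub_nonneg.mpr (hmax' i))).mp hz p hp
    linarith
  have hNf : ∑ w ∈ N, f w = s * a := by
    have h1 : ∑ w ∈ N, f w = -(a * P.card) := by linarith
    rw [hcard] at h1
    rw [h1]; ring
  refine ⟨a, ha, hfa, ?_, ?_⟩
  · -- independence of P
    intro p hp q hq hadj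
    have hpmax := hfa p hp
    have h1 := heig p
    rw [hpmax] at h1
    have h2 := chain1 p
    have h3 := chain2 p
    have h5 := Finset.sum_filter_add_sum_filter_not (G.neighborFinset p) (fun w => f w < 0) f
    have h6 : 0 ≤ ∑ w ∈ (G.neighborFinset p).filter (fun w => ¬ f w < 0), f w :=
      Finset.sum_nonneg (by
        intro i hi
        simp only [Finset.mem_filter] at hi
        exact not_lt.mp hi.2)
    have hE : ∑ w ∈ (G.neighborFinset p).filter (fun w => ¬ f w < 0), f w = 0 := by linarith
    have hq0 : f q = 0 := by
      have hqmem : q ∈ (G.neighborFinset p).filter (fun w => ¬ f w < 0) := by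
        simp only [Finset.mem_filter, SimpleGraph.mem_neighborFinset]
        exact ⟨hadj, by have := hfa q hq; linarith⟩
      exact (Finset.sum_eq_zero_iff_of_nonneg (by
        intro i hi
        simp only [Finset.mem_filter] at hi
        exact not_lt.mp hi.2)).mp hE q hqmem
    have := hfa q hq
    linarith
  · -- complete adjacency to N
    intro p hp n hn
    by_contra hadj
    have hpmax := hfa p hp
    have h1 := heig p
    rw [hpmax] at h1
    have h2 := chain1 p
    have h3 := chain2 p
    have h5 := Finset.sum_sdiff (f := f) (hsubN p)
    have hE2 : ∑ w ∈ N \ (G.neighborFinset p).filter (fun w => f w < 0), f w = 0 := by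
      linarith
    have hnmem : n ∈ N \ (G.neighborFinset p).filter (fun w => f w < 0) := by
      simp only [Finset.mem_sdiff, Finset.mem_filter, SimpleGraph.mem_neighborFinset]
      exact ⟨hn, fun hc => hadj hc.1⟩
    have hzero := (Finset.sum_eq_zero_iff_of_nonpos
      (fun i hi => le_of_lt ((hN i).mp (Finset.mem_sdiff.mp hi).1))).mp hE2 n hnmem
    have := (hN n).mp hn
    linarith

end Aux

/-- an s-eigenfunction of a primitive strongly regular graph whose
support has exactly −2s elements is, up to scaling, the ±1 indicator of the two
parts of an induced complete bipartite subgraph with parts of size −s. -/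
theorem stmt9 {V : Type*} [Fintype V] [DecidableEq V] (G : SimpleGraph V)
    [DecidableRel G.Adj]
    (v k lam mu : ℕ) (h : G.IsSRGWith v k lam mu)
    (hprim : 0 < mu ∧ mu < k)
    (r s : ℝ) (hs0 : s < 0) (hr0 : 0 < r)
    (hr : r ^ 2 - ((lam : ℝ) - mu) * r - ((k : ℝ) - mu) = 0)
    (hs : s ^ 2 - ((lam : ℝ) - mu) * s - ((k : ℝ) - mu) = 0)
    (f : V → ℝ) (hf0 : f ≠ 0)
    (heig : ∀ u, s * f u = ∑ w ∈ G.neighborFinset u, f w)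
    (hsupp : ((Function.support f).ncard : ℝ) = -2 * s) :
    ∃ T₀ T₁ : Set V, Disjoint T₀ T₁ ∧
      (T₀.ncard : ℝ) = -s ∧ (T₁.ncard : ℝ) = -s ∧
      Function.support f = T₀ ∪ T₁ ∧
      (∀ x ∈ T₀, ∀ y ∈ T₁, G.Adj x y) ∧
      (∀ x ∈ T₀, ∀ y ∈ T₀, ¬ G.Adj x y) ∧
      (∀ x ∈ T₁, ∀ y ∈ T₁, ¬ G.Adj x y) ∧
      ∃ c : ℝ, c ≠ 0 ∧ (∀ x ∈ T₀, f x = c) ∧ (∀ x ∈ T₁, f x = -c) := by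
  classical
  -- the sum of f is zero
  have hsum : ∑ w, f w = 0 := by
    have hA : ∑ u, ∑ w ∈ G.neighborFinset u, f w = (k : ℝ) * ∑ w, f w := by
      have e1 : ∀ u : V, ∑ w ∈ G.neighborFinset u, f w
          = ∑ w, if G.Adj u w then f w else 0 := by
        intro u
        rw [SimpleGraph.neighborFinset_eq_filter, Finset.sum_filter]
      simp_rw [e1]
      rw [Finset.sum_comm]
      have e2 : ∀ w : V, (∑ u, if G.Adj u w then f w else 0) = (k : ℝ) * f w := by
        intro w
        rw [← Finset.sum_filter, Finset.sum_const, nsmul_eq_mul]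
        congr 1
        have e3 : Finset.univ.filter (fun u => G.Adj u w) = G.neighborFinset w := by
          ext u
          simp [SimpleGraph.mem_neighborFinset, SimpleGraph.adj_comm]
        rw [e3]
        exact_mod_cast congrArg Nat.cast (h.regular w)
      simp_rw [e2]
      rw [← Finset.mul_sum]
    have hB : s * ∑ w, f w = ∑ u, ∑ w ∈ G.neighborFinset u, f w := by
      rw [Finset.mul_sum]
      exact Finset.sum_congr rfl (fun u _ => heig u)
    have hske : s * (∑ w, f w) = (k : ℝ) * ∑ w, f w := hB.trans hA
    by_contra hSne
    have : s = (k : ℝ) := mul_right_cancel₀ hSne hske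
    have hk0 : (0 : ℝ) ≤ (k : ℝ) := Nat.cast_nonneg k
    linarith
  set P := Finset.univ.filter (fun x => 0 < f x) with hPdef
  set N := Finset.univ.filter (fun x => f x < 0) with hNdef
  have hPc : ∀ x, x ∈ P ↔ 0 < f x := by intro x; simp [hPdef]
  have hNc : ∀ x, x ∈ N ↔ f x < 0 := by intro x; simp [hNdef]
  have hexP : ∃ x, 0 < f x := exists_pos_aux f hf0 hsum
  -- data for -f
  have hg0 : (fun x => -f x) ≠ 0 := by
    intro hg
    apply hf0
    funext x
    have := congrFun hg x
    simpa using this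
  have hgsum : ∑ w, -f w = 0 := by
    rw [Finset.sum_neg_distrib, hsum, neg_zero]
  have hgeig : ∀ u, s * (-f u) = ∑ w ∈ G.neighborFinset u, -f w := by
    intro u
    rw [Finset.sum_neg_distrib, ← heig u]
    ring
  have hexN : ∃ x, 0 < -f x := exists_pos_aux (fun x => -f x) hg0 hgsum
  have hNc' : ∀ x, x ∈ N ↔ 0 < -f x := by
    intro x; rw [hNc]; constructor <;> intro hx <;> linarith
  have hPc' : ∀ x, x ∈ P ↔ -f x < 0 := by
    intro x; rw [hPc]; constructor <;> intro hx <;> linarith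
  obtain ⟨hPge, hPcond⟩ := core_aux G s hs0 f heig hsum hexP P N hPc hNc
  obtain ⟨hNge, hNcond⟩ :=
    core_aux G s hs0 (fun x => -f x) hgeig hgsum hexN N P hNc' hPc'
  have hdisj : Disjoint P N := by
    rw [Finset.disjoint_left]
    intro y hyP hyN
    rw [hPc] at hyP; rw [hNc] at hyN; linarith
  have hsuppeq : Function.support f = ↑(P ∪ N) := by
    ext x
    simp only [Function.mem_support, Finset.coe_union, Set.mem_union, Finset.mem_coe,
      hPc, hNc]
    constructor
    · intro hx
      rcases Ne.lt_or_gt hx with h' | h'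
      · exact Or.inr h'
      · exact Or.inl h'
    · rintro (h' | h') <;> intro hc <;> rw [hc] at h' <;> simp at h'
  have hcards : (P.card : ℝ) + (N.card : ℝ) = -2 * s := by
    have h1 : (Function.support f).ncard = (P ∪ N).card := by
      rw [hsuppeq, Set.ncard_coe_finset]
    rw [h1, Finset.card_union_of_disjoint hdisj] at hsupp
    push_cast at hsupp
    linarith
  have hPcard : (P.card : ℝ) = -s := by linarith
  have hNcard : (N.card : ℝ) = -s := by linarith
  obtain ⟨a, ha, hfa, hPind, hPNadj⟩ := hPcond hPcard
  obtain ⟨b, hb, hfb, hNind, hNPadj⟩ := hNcond hNcard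
  have hfb' : ∀ n ∈ N, f n = -b := by
    intro n hn
    have := hfb n hn
    linarith
  have hab : a = b := by
    have h1 : ∑ w ∈ P, f w = a * P.card := by
      rw [Finset.sum_congr rfl hfa, Finset.sum_const, nsmul_eq_mul, mul_comm]
    have h2 : ∑ w ∈ N, f w = -b * N.card := by
      rw [Finset.sum_congr rfl hfb', Finset.sum_const, nsmul_eq_mul]; ring
    have h3 := sumPN_aux f hsum P N hPc hNc hdisj
    rw [h1, h2, hPcard, hNcard] at h3
    have hs' : (-s) ≠ 0 := ne_of_gt (by linarith)
    have h4 : a * (-s) = b * (-s) := by linarith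
    exact mul_right_cancel₀ hs' h4
  refine ⟨↑P, ↑N, Finset.disjoint_coe.mpr hdisj,
    by rw [Set.ncard_coe_finset]; exact hPcard,
    by rw [Set.ncard_coe_finset]; exact hNcard,
    by rw [hsuppeq, Finset.coe_union],
    fun x hx y hy => hPNadj x hx y hy,
    fun x hx y hy => hPind x hx y hy,
    fun x hx y hy => hNind x hx y hy,
    a, ne_of_gt ha, fun x hx => hfa x hx, fun x hx => by rw [hfb' x hx, hab]⟩
end
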